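/- arXiv:1402.0485 — 8 statements merged into one kernel-verified Lean document; each statement's English description precedes it below -/
import Mathlib

section
/- Let k ≥ 1 be an integer and let M be a real matrix indexed by pairs (T,T') of subsets of {1,…,k} such that: all entries M(T,T') are nonnegative; M is symmetric (M(T,T') = M(T',T) for all T,T'); and M(T,T') = 0 whenever T ∩ T' ≠ ∅. Let π(T) = ∑_{T'} M(T,T') denote the row marginals, and set w(T) = ∑_{T' : T' ∩ T = ∅} π(T'). Then H(M) ≤ 2·H(π) + ∑_{T : π(T) > 0} π(T)·log(w(T)), where H(M) = ∑_{(T,T')} −M(T,T')·log M(T,T') and H(π) = ∑_{T} −π(T)·log π(T). (Note that w(T) ≥ π(T) for every T, so log w(T) is well defined whenever π(T) > 0.) -/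
open Finset

/-- For a symmetric nonnegative matrix `M` indexed by subsets of `{1,…,k}`
whose support avoids intersecting pairs, with row marginals `p` (denoted π in the paper) and
weights `w`, the entropy satisfies `H(M) ≤ 2 H(π) + ∑_{π(T)>0} π(T) log w(T)`. -/
theorem entropy_bound_for_edge_profiles (k : ℕ) (hk : 1 ≤ k)
    (M : Finset (Fin k) → Finset (Fin k) → ℝ)
    (hM_nonneg : ∀ T T', 0 ≤ M T T')
    (hM_symm : ∀ T T', M T T' = M T' T)
    (hM_supp : ∀ T T', (T ∩ T').Nonempty → M T T' = 0)
    (p w : Finset (Fin k) → ℝ)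
    (hp : ∀ T, p T = ∑ T' : Finset (Fin k), M T T')
    (hw : ∀ T, w T = ∑ T' ∈ univ.filter (fun T' => T' ∩ T = ∅), p T') :
    ∑ T : Finset (Fin k), ∑ T' : Finset (Fin k), Real.negMulLog (M T T') ≤
      2 * (∑ T : Finset (Fin k), Real.negMulLog (p T)) +
        ∑ T ∈ univ.filter (fun T => 0 < p T), p T * Real.log (w T) := by
  classical
  have hp_nonneg : ∀ T, 0 ≤ p T := fun T => by
    rw [hp]; exact sum_nonneg fun T' _ => hM_nonneg T T'
  have hMle : ∀ T T', M T T' ≤ p T' := fun T T' => by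
    rw [hp T', hM_symm]
    exact single_le_sum (fun S _ => hM_nonneg T' S) (mem_univ T)
  have hMle' : ∀ T T', M T T' ≤ p T := fun T T' => by
    rw [hM_symm]; exact hMle T' T
  have hpw : ∀ T, p T ≤ w T := by
    intro T
    rw [hp, hw, sum_filter]
    refine sum_le_sum fun T' _ => ?_
    by_cases h : T' ∩ T = ∅
    · simpa [h] using hMle T T'
    · rw [hM_supp T T' (by rw [inter_comm]; exact nonempty_iff_ne_empty.2 h), if_neg h]
  set N : Finset (Fin k) → Finset (Fin k) → ℝ := fun T T' =>
    if 0 < M T T' then p T * p T' / w T else 0 with hN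
  have key : ∀ T T', Real.negMulLog (M T T') ≤
      M T T' * (Real.log (w T) - Real.log (p T) - Real.log (p T')) + (N T T' - M T T') := by
    intro T T'
    by_cases hM0 : 0 < M T T'
    · have hpT : 0 < p T := lt_of_lt_of_le hM0 (hMle' T T')
      have hpT' : 0 < p T' := lt_of_lt_of_le hM0 (hMle T T')
      have hwT : 0 < w T := lt_of_lt_of_le hpT (hpw T)
      have hNval : N T T' = p T * p T' / w T := by simp [hN, hM0]
      have hNpos : 0 < p T * p T' / w T := div_pos (mul_pos hpT hpT') hwT
      have hlogN : Real.log (p T * p T' / w T) =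
          Real.log (p T) + Real.log (p T') - Real.log (w T) := by
        rw [Real.log_div (mul_pos hpT hpT').ne' hwT.ne', Real.log_mul hpT.ne' hpT'.ne']
      set a := M T T'
      set b := p T * p T' / w T
      have h1 : Real.log (b / a) ≤ b / a - 1 :=
        Real.log_le_sub_one_of_pos (div_pos hNpos hM0)
      rw [Real.log_div hNpos.ne' hM0.ne'] at h1
      have h2 : a * (Real.log b - Real.log a) ≤ a * (b / a - 1) :=
        mul_le_mul_of_nonneg_left h1 hM0.le
      have h3 : a * (b / a - 1) = b - a := by field_simp
      rw [h3] at h2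
      have h5 : a * (Real.log (w T) - Real.log (p T) - Real.log (p T')) = -(a * Real.log b) := by
        rw [hlogN]; ring
      rw [Real.negMulLog, hNval, h5]
      linarith
    · have hM0' : M T T' = 0 := le_antisymm (not_lt.1 hM0) (hM_nonneg T T')
      simp [hM0', hN, Real.negMulLog]
  have hNsum : ∀ T, ∑ T' : Finset (Fin k), N T T' ≤ p T := by
    intro T
    by_cases hpT : 0 < p T
    · have hwT : 0 < w T := lt_of_lt_of_le hpT (hpw T)
      have hb : ∀ T', N T T' ≤ p T / w T * (if T' ∩ T = ∅ then p T' else 0) := by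
        intro T'
        by_cases hM0 : 0 < M T T'
        · have hdisj : T' ∩ T = ∅ := by
            by_contra h
            exact absurd (hM_supp T T' (by rw [inter_comm]; exact nonempty_iff_ne_empty.2 h))
              hM0.ne'
          simp only [hN, if_pos hM0, if_pos hdisj]
          rw [div_mul_eq_mul_div, mul_div_assoc]
        · simp only [hN, if_neg hM0]
          by_cases hdisj : T' ∩ T = ∅
          · rw [if_pos hdisj]
            exact mul_nonneg (div_nonneg (hp_nonneg T) hwT.le) (hp_nonneg T')
          · rw [if_neg hdisj, mul_zero]
      calc ∑ T' : Finset (Fin k), N T T'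
          ≤ ∑ T' : Finset (Fin k), p T / w T * (if T' ∩ T = ∅ then p T' else 0) :=
            sum_le_sum fun T' _ => hb T'
        _ = p T / w T * w T := by rw [← mul_sum, hw T, sum_filter]
        _ = p T := div_mul_cancel₀ _ hwT.ne'
    · have hpT0 : p T = 0 := le_antisymm (not_lt.1 hpT) (hp_nonneg T)
      have hz : ∀ T', N T T' = 0 := by
        intro T'
        have : M T T' = 0 :=
          le_antisymm (hpT0 ▸ hMle' T T') (hM_nonneg T T')
        simp [hN, this]
      simp [hz, hpT0]
  have colsum : ∀ T', ∑ T : Finset (Fin k), M T T' = p T' := by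
    intro T'
    rw [hp T']
    exact sum_congr rfl fun T _ => hM_symm T T'
  calc ∑ T : Finset (Fin k), ∑ T' : Finset (Fin k), Real.negMulLog (M T T')
      ≤ ∑ T : Finset (Fin k), ∑ T' : Finset (Fin k),
          (M T T' * (Real.log (w T) - Real.log (p T) - Real.log (p T')) + (N T T' - M T T')) :=
        sum_le_sum fun T _ => sum_le_sum fun T' _ => key T T'
    _ = ∑ T : Finset (Fin k), ∑ T' : Finset (Fin k),
          M T T' * (Real.log (w T) - Real.log (p T) - Real.log (p T'))
        + (∑ T : Finset (Fin k), ∑ T' : Finset (Fin k), N T T'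
           - ∑ T : Finset (Fin k), ∑ T' : Finset (Fin k), M T T') := by
        simp [sum_add_distrib, sum_sub_distrib]
    _ ≤ ∑ T : Finset (Fin k), ∑ T' : Finset (Fin k),
          M T T' * (Real.log (w T) - Real.log (p T) - Real.log (p T')) + 0 := by
        gcongr
        have h1 : ∑ T : Finset (Fin k), ∑ T' : Finset (Fin k), M T T'
            = ∑ T : Finset (Fin k), p T := sum_congr rfl fun T _ => (hp T).symm
        have h2 : ∑ T : Finset (Fin k), ∑ T' : Finset (Fin k), N T T'
            ≤ ∑ T : Finset (Fin k), p T := sum_le_sum fun T _ => hNsum T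
        linarith
    _ = 2 * (∑ T : Finset (Fin k), Real.negMulLog (p T)) +
        ∑ T ∈ univ.filter (fun T => 0 < p T), p T * Real.log (w T) := by
        rw [add_zero]
        have expand : ∀ T, ∑ T' : Finset (Fin k),
            M T T' * (Real.log (w T) - Real.log (p T) - Real.log (p T'))
            = p T * Real.log (w T) - p T * Real.log (p T)
              - ∑ T' : Finset (Fin k), M T T' * Real.log (p T') := by
          intro T
          simp only [mul_sub, sum_sub_distrib, ← sum_mul, ← hp T]
        simp only [expand, sum_sub_distrib]
        rw [sum_comm (f := fun T T' => M T T' * Real.log (p T'))]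
        have h3 : ∑ T' : Finset (Fin k), ∑ T : Finset (Fin k), M T T' * Real.log (p T')
            = ∑ T' : Finset (Fin k), p T' * Real.log (p T') := by
          refine sum_congr rfl fun T' _ => ?_
          rw [← sum_mul, colsum T']
        rw [h3]
        have h4 : ∑ T ∈ univ.filter (fun T => 0 < p T), p T * Real.log (w T)
            = ∑ T : Finset (Fin k), p T * Real.log (w T) := by
          refine sum_filter_of_ne fun T _ h => ?_
          rcases lt_or_eq_of_le (hp_nonneg T) with h' | h'
          · exact h'
          · exact absurd (by rw [← h', zero_mul]) h
        rw [h4]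
        simp only [Real.negMulLog, neg_mul, sum_neg_distrib]
        ring
end

section
/- Let (Ω, ℱ, P) be a probability space and let Q, R : Ω → ℝ be independent, identically distributed measurable functions with 0 ≤ Q ≤ 1 almost surely. Then for every integer k ≥ 1 and every ε ∈ (0,1), E[s_k(Q·R)] ≥ 2 · E[s_k(Q) · 1_{Q ≤ ε}] · P(Q > ε). -/
/-!
Put `u = s_k · 1_{[0,ε]}` and `v = 1_{(ε,1]}`. For `q, r ∈ [0,1]` at most one of
`u(q) v(r)` and `u(r) v(q)` is nonzero, and each is at most `s_k(qr)` because `qr ≤ min q r`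
and `s_k` is nonincreasing and nonnegative on `[0,1]`. Taking expectations, independence
factorizes both products and identical distribution makes them equal to
`E[u(Q)] · P(Q > ε)`.
-/

open MeasureTheory ProbabilityTheory Finset unitInterval

def sk (k : ℕ) (x : ℝ) : ℝ := ∑ j ∈ range k, (1 - x) ^ j

lemma sk_nonneg (k : ℕ) {x : ℝ} (hx : x ≤ 1) : 0 ≤ sk k x :=
  sum_nonneg fun j _ => pow_nonneg (sub_nonneg.2 hx) j

lemma norm_sk_le (k : ℕ) {x : ℝ} (hx : x ∈ I) : ‖sk k x‖ ≤ k := by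
  rw [Real.norm_of_nonneg (sk_nonneg k hx.2)]
  calc sk k x ≤ ∑ _j ∈ range k, (1 : ℝ) :=
        sum_le_sum fun j _ => pow_le_one₀ (sub_nonneg.2 hx.2) (by linarith [hx.1])
    _ = k := by simp

lemma sk_antitoneOn (k : ℕ) : AntitoneOn (sk k) (Set.Iic 1) := fun x _ y hy hxy =>
  sum_le_sum fun j _ => pow_le_pow_left₀ (sub_nonneg.2 hy) (by linarith) j

lemma measurable_sk (k : ℕ) : Measurable (sk k) := by
  unfold sk
  fun_prop

lemma indicator_mul_indicator_add_le {f : ℝ → ℝ} (hf : AntitoneOn f I)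
    (hf0 : ∀ x ∈ I, 0 ≤ f x) (S : Set ℝ) {q r : ℝ} (hq : q ∈ I) (hr : r ∈ I) :
    S.indicator f q * Sᶜ.indicator 1 r + S.indicator f r * Sᶜ.indicator 1 q ≤ f (q * r) := by
  have hqr : q * r ∈ I := mul_mem hq hr
  by_cases hqS : q ∈ S <;> by_cases hrS : r ∈ S <;> simp [hqS, hrS, hf0 _ hqr]
  · exact hf hqr hq (mul_le_of_le_one_right hq.1 hr.2)
  · exact hf hqr hr (mul_le_of_le_one_left hr.1 hq.2)

theorem two_mul_integral_mul_integral_le {Ω α : Type*} [MeasurableSpace Ω] [MeasurableSpace α]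
    {P : Measure Ω} {X Y : Ω → α} (hindep : IndepFun X Y P) (hid : IdentDistrib X Y P P)
    {u v : α → ℝ} (hu : Measurable u) (hv : Measurable v)
    (hui : Integrable (fun ω => u (X ω)) P) (hvi : Integrable (fun ω => v (X ω)) P)
    {F : Ω → ℝ} (hF : Integrable F P)
    (hle : ∀ᵐ ω ∂P, u (X ω) * v (Y ω) + u (Y ω) * v (X ω) ≤ F ω) :
    2 * (∫ ω, u (X ω) ∂P) * (∫ ω, v (X ω) ∂P) ≤ ∫ ω, F ω ∂P := by
  have hXY : IndepFun (u ∘ X) (v ∘ Y) P := hindep.comp hu hv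
  have hYX : IndepFun (u ∘ Y) (v ∘ X) P := hindep.symm.comp hu hv
  have huY : Integrable (fun ω => u (Y ω)) P := (hid.comp hu).integrable_snd hui
  have hvY : Integrable (fun ω => v (Y ω)) P := (hid.comp hv).integrable_snd hvi
  have hint_u : ∫ ω, u (Y ω) ∂P = ∫ ω, u (X ω) ∂P := (hid.comp hu).integral_eq.symm
  have hint_v : ∫ ω, v (Y ω) ∂P = ∫ ω, v (X ω) ∂P := (hid.comp hv).integral_eq.symm
  have hprod_XY : ∫ ω, u (X ω) * v (Y ω) ∂P = (∫ ω, u (X ω) ∂P) * ∫ ω, v (X ω) ∂P := by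
    rw [← hint_v]
    exact hXY.integral_fun_mul_eq_mul_integral hui.1 hvY.1
  have hprod_YX : ∫ ω, u (Y ω) * v (X ω) ∂P = (∫ ω, u (X ω) ∂P) * ∫ ω, v (X ω) ∂P := by
    rw [← hint_u]
    exact hYX.integral_fun_mul_eq_mul_integral huY.1 hvi.1
  calc 2 * (∫ ω, u (X ω) ∂P) * (∫ ω, v (X ω) ∂P)
      = (∫ ω, u (X ω) * v (Y ω) ∂P) + ∫ ω, u (Y ω) * v (X ω) ∂P := by
        rw [hprod_XY, hprod_YX]; ring
    _ = ∫ ω, (u (X ω) * v (Y ω) + u (Y ω) * v (X ω)) ∂P :=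
        (integral_add (hXY.integrable_mul hui hvY) (hYX.integrable_mul huY hvi)).symm
    _ ≤ ∫ ω, F ω ∂P :=
        integral_mono_ae ((hXY.integrable_mul hui hvY).add (hYX.integrable_mul huY hvi)) hF hle

lemma integrable_comp_of_norm_le_on {Ω α E : Type*} [MeasurableSpace Ω] [MeasurableSpace α]
    [NormedAddCommGroup E] [MeasurableSpace E] [OpensMeasurableSpace E] [SecondCountableTopology E]
    {P : Measure Ω} [IsFiniteMeasure P] {X : Ω → α} (hX : AEMeasurable X P) {s : Set α}
    (hXs : ∀ᵐ ω ∂P, X ω ∈ s) {f : α → E} (hf : Measurable f) {C : ℝ}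
    (hfC : ∀ x ∈ s, ‖f x‖ ≤ C) : Integrable (fun ω => f (X ω)) P :=
  .of_bound (hf.comp_aemeasurable hX).aestronglyMeasurable C <| by
    filter_upwards [hXs] with ω hω using hfC _ hω

lemma integral_indicator_one_comp {Ω α : Type*} [MeasurableSpace Ω] [MeasurableSpace α]
    {P : Measure Ω} {X : Ω → α} (hX : AEMeasurable X P) {s : Set α} (hs : MeasurableSet s) :
    ∫ ω, s.indicator 1 (X ω) ∂P = P.real (X ⁻¹' s) := by
  rw [← integral_map hX (aestronglyMeasurable_one.indicator hs), integral_indicator_one hs,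
    map_measureReal_apply_of_aemeasurable hX hs]

theorem sk_product_lower_bound_general {Ω : Type*} [MeasurableSpace Ω]
    (P : Measure Ω) [IsProbabilityMeasure P]
    (Q R : Ω → ℝ)
    (hindep : IndepFun Q R P) (hid : IdentDistrib Q R P P)
    (hQ0 : ∀ᵐ ω ∂P, 0 ≤ Q ω) (hQ1 : ∀ᵐ ω ∂P, Q ω ≤ 1)
    (k : ℕ) (ε : ℝ) :
    (∫ ω, (∑ j ∈ Finset.range k, (1 - Q ω * R ω) ^ j) ∂P) ≥
      2 * (∫ ω, (if Q ω ≤ ε then ∑ j ∈ Finset.range k, (1 - Q ω) ^ j else 0) ∂P) *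
        (P {ω | ε < Q ω}).toReal := by
  have hQ : ∀ᵐ ω ∂P, Q ω ∈ I := by
    filter_upwards [hQ0, hQ1] with ω h0 h1 using ⟨h0, h1⟩
  have hR : ∀ᵐ ω ∂P, R ω ∈ I := hid.ae_mem_snd measurableSet_Icc hQ
  have hQm : AEMeasurable Q P := hid.aemeasurable_fst
  have hum : Measurable ((Set.Iic ε).indicator (sk k)) :=
    (measurable_sk k).indicator measurableSet_Iic
  have hvm : Measurable ((Set.Ioi ε).indicator (1 : ℝ → ℝ)) :=
    measurable_one.indicator measurableSet_Ioi
  have hu : Integrable (fun ω => (Set.Iic ε).indicator (sk k) (Q ω)) P :=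
    integrable_comp_of_norm_le_on hQm hQ hum fun x hx =>
      (norm_indicator_le_norm_self _ _).trans (norm_sk_le k hx)
  have hv : Integrable (fun ω => (Set.Ioi ε).indicator (1 : ℝ → ℝ) (Q ω)) P :=
    integrable_comp_of_norm_le_on hQm hQ hvm fun x _ => by
      simpa using norm_indicator_le_norm_self (1 : ℝ → ℝ) x
  have hF : Integrable (fun ω => sk k (Q ω * R ω)) P :=
    integrable_comp_of_norm_le_on (hQm.mul hid.aemeasurable_snd)
      (by filter_upwards [hQ, hR] with ω hq hr using mul_mem hq hr) (measurable_sk k)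
      fun x hx => norm_sk_le k hx
  have hbound := two_mul_integral_mul_integral_le hindep hid hum hvm hu hv hF <| by
    filter_upwards [hQ, hR] with ω hq hr
    rw [← Set.compl_Iic]
    exact indicator_mul_indicator_add_le ((sk_antitoneOn k).mono fun x hx => hx.2)
      (fun x hx => sk_nonneg k hx.2) _ hq hr
  have hlow : ∫ ω, (if Q ω ≤ ε then ∑ j ∈ Finset.range k, (1 - Q ω) ^ j else 0) ∂P =
      ∫ ω, (Set.Iic ε).indicator (sk k) (Q ω) ∂P := by
    simp only [Set.indicator_apply, Set.mem_Iic, sk]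
  rw [integral_indicator_one_comp hQm measurableSet_Ioi] at hbound
  rw [ge_iff_le, hlow, ← measureReal_def]
  exact hbound

/-- For `Q, R` i.i.d. with `0 ≤ Q ≤ 1` a.s., every `k ≥ 1` and `ε ∈ (0,1)`,
`E[s_k(QR)] ≥ 2 E[s_k(Q) 1_{Q ≤ ε}] P(Q > ε)`. -/
theorem sk_product_lower_bound {Ω : Type*} [MeasurableSpace Ω]
    (P : Measure Ω) [IsProbabilityMeasure P]
    (Q R : Ω → ℝ) (hQ : Measurable Q) (hR : Measurable R)
    (hindep : IndepFun Q R P) (hid : IdentDistrib Q R P P)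
    (hQ0 : ∀ᵐ ω ∂P, 0 ≤ Q ω) (hQ1 : ∀ᵐ ω ∂P, Q ω ≤ 1)
    (k : ℕ) (hk : 1 ≤ k) (ε : ℝ) (hε0 : 0 < ε) (hε1 : ε < 1) :
    (∫ ω, (∑ j ∈ Finset.range k, (1 - Q ω * R ω) ^ j) ∂P) ≥
      2 * (∫ ω, (if Q ω ≤ ε then ∑ j ∈ Finset.range k, (1 - Q ω) ^ j else 0) ∂P) *
        (P {ω | ε < Q ω}).toReal :=
  sk_product_lower_bound_general P Q R hindep hid hQ0 hQ1 k ε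
end

section
/- Let (Ω, ℱ, P) be a probability space, let Q, R : Ω → ℝ be independent, identically distributed measurable functions with 0 < Q ≤ 1 almost surely, and suppose 1/Q is integrable. Let α ∈ ℝ and assume that for every integer k ≥ 1, 2·E[s_k(Q)] ≥ α·E[s_k(Q·R)]. Then 2·E[1/Q] ≥ α·(E[1/Q])², and consequently α ≤ 2/E[1/Q]. -/
/-!
Since `0 < x ≤ 1`, the partial geometric sums `s_k(x) = ∑_{j<k} (1 - x)^j` increase to `1/x`, so by
dominated convergence (with dominating functions `1/Q` and `1/(QR)`) the hypothesis passes to the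
limit `k → ∞` as `2 E[1/Q] ≥ α E[1/(QR)]`. Independence and equal distribution give
`E[1/(QR)] = E[1/Q] E[1/R] = E[1/Q]²`, and `E[1/Q] ≥ 1 > 0` lets us divide.
-/

open MeasureTheory ProbabilityTheory Finset Filter Topology

theorem hasSum_one_sub_pow {x : ℝ} (hx0 : 0 < x) (hx1 : x ≤ 1) :
    HasSum (fun j : ℕ => (1 - x) ^ j) (1 / x) := by
  simpa [one_div] using hasSum_geometric_of_lt_one (by linarith : (0 : ℝ) ≤ 1 - x) (by linarith)

theorem norm_sum_range_one_sub_pow_le {x : ℝ} (hx0 : 0 < x) (hx1 : x ≤ 1) (k : ℕ) :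
    ‖∑ j ∈ range k, (1 - x) ^ j‖ ≤ 1 / x := by
  have hterm : ∀ j, 0 ≤ (1 - x) ^ j := fun j => pow_nonneg (by linarith) j
  rw [Real.norm_eq_abs, abs_of_nonneg (sum_nonneg fun j _ => hterm j),
    ← (hasSum_one_sub_pow hx0 hx1).tsum_eq]
  exact (hasSum_one_sub_pow hx0 hx1).summable.sum_le_tsum _ fun j _ => hterm j

theorem tendsto_integral_sum_range_one_sub_pow {Ω : Type*} [MeasurableSpace Ω] {μ : Measure Ω}
    {X : Ω → ℝ} (hX : AEMeasurable X μ) (hX0 : ∀ᵐ ω ∂μ, 0 < X ω) (hX1 : ∀ᵐ ω ∂μ, X ω ≤ 1)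
    (hint : Integrable (fun ω => 1 / X ω) μ) :
    Tendsto (fun k => ∫ ω, ∑ j ∈ range k, (1 - X ω) ^ j ∂μ) atTop (𝓝 (∫ ω, 1 / X ω ∂μ)) := by
  refine tendsto_integral_of_dominated_convergence _ (fun k => ?_) hint (fun k => ?_) ?_
  · exact (Finset.aemeasurable_fun_sum _ fun j _ =>
      (aemeasurable_const.sub hX).pow_const j).aestronglyMeasurable
  · filter_upwards [hX0, hX1] with ω h0 h1 using norm_sum_range_one_sub_pow_le h0 h1 k
  · filter_upwards [hX0, hX1] with ω h0 h1 using (hasSum_one_sub_pow h0 h1).tendsto_sum_nat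

theorem one_le_integral_one_div {Ω : Type*} [MeasurableSpace Ω] {μ : Measure Ω}
    [IsProbabilityMeasure μ] {X : Ω → ℝ} (hX0 : ∀ᵐ ω ∂μ, 0 < X ω) (hX1 : ∀ᵐ ω ∂μ, X ω ≤ 1)
    (hint : Integrable (fun ω => 1 / X ω) μ) :
    1 ≤ ∫ ω, 1 / X ω ∂μ := by
  have : ∫ _, (1 : ℝ) ∂μ ≤ ∫ ω, 1 / X ω ∂μ := by
    refine integral_mono_ae (integrable_const 1) hint ?_
    filter_upwards [hX0, hX1] with ω h0 h1
    rwa [le_div_iff₀ h0, one_mul]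
  simpa using this

namespace ProbabilityTheory

variable {Ω Ω' : Type*} [MeasurableSpace Ω] [MeasurableSpace Ω'] {μ : Measure Ω} {X Y : Ω → ℝ}

theorem IndepFun.one_div_comp (hXY : IndepFun X Y μ) :
    IndepFun (fun ω => 1 / X ω) (fun ω => 1 / Y ω) μ :=
  hXY.comp (measurable_const.div measurable_id) (measurable_const.div measurable_id)

theorem IdentDistrib.one_div_comp {ν : Measure Ω'} {Z : Ω' → ℝ} (hid : IdentDistrib X Z μ ν) :
    IdentDistrib (fun ω => 1 / X ω) (fun ω => 1 / Z ω) μ ν :=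
  hid.comp (measurable_const.div measurable_id)

theorem IndepFun.integrable_one_div_mul (hXY : IndepFun X Y μ) (hid : IdentDistrib X Y μ μ)
    (hint : Integrable (fun ω => 1 / X ω) μ) :
    Integrable (fun ω => 1 / (X ω * Y ω)) μ :=
  (hXY.one_div_comp.integrable_mul hint (hid.one_div_comp.integrable_iff.mp hint)).congr
    (.of_forall fun ω => one_div_mul_one_div (X ω) (Y ω))

theorem IndepFun.integral_one_div_mul (hXY : IndepFun X Y μ) (hid : IdentDistrib X Y μ μ)
    (hint : Integrable (fun ω => 1 / X ω) μ) :
    ∫ ω, 1 / (X ω * Y ω) ∂μ = (∫ ω, 1 / X ω ∂μ) ^ 2 := by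
  simp only [← one_div_mul_one_div]
  rw [hXY.one_div_comp.integral_fun_mul_eq_mul_integral hint.aestronglyMeasurable
    (hid.one_div_comp.integrable_iff.mp hint).aestronglyMeasurable,
    ← hid.one_div_comp.integral_eq, sq]

end ProbabilityTheory

theorem alpha_bound_integrable_case_general {Ω : Type*} [MeasurableSpace Ω]
    (P : Measure Ω) [IsProbabilityMeasure P]
    (Q R : Ω → ℝ)
    (hindep : IndepFun Q R P) (hid : IdentDistrib Q R P P)
    (hQ0 : ∀ᵐ ω ∂P, 0 < Q ω) (hQ1 : ∀ᵐ ω ∂P, Q ω ≤ 1)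
    (hint : Integrable (fun ω => 1 / Q ω) P)
    (α : ℝ)
    (hineq : ∀ k : ℕ, 1 ≤ k →
      2 * (∫ ω, (∑ j ∈ Finset.range k, (1 - Q ω) ^ j) ∂P) ≥
        α * (∫ ω, (∑ j ∈ Finset.range k, (1 - Q ω * R ω) ^ j) ∂P)) :
    2 * (∫ ω, 1 / Q ω ∂P) ≥ α * (∫ ω, 1 / Q ω ∂P) ^ 2 ∧
      α ≤ 2 / (∫ ω, 1 / Q ω ∂P) := by
  have hR0 : ∀ᵐ ω ∂P, 0 < R ω := hid.ae_snd measurableSet_Ioi hQ0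
  have hR1 : ∀ᵐ ω ∂P, R ω ≤ 1 := hid.ae_snd measurableSet_Iic hQ1
  have hQR0 : ∀ᵐ ω ∂P, 0 < Q ω * R ω := by
    filter_upwards [hQ0, hR0] with ω h h' using mul_pos h h'
  have hQR1 : ∀ᵐ ω ∂P, Q ω * R ω ≤ 1 := by
    filter_upwards [hQ1, hR0, hR1] with ω h h' h'' using mul_le_one₀ h h'.le h''
  have hlimQ := tendsto_integral_sum_range_one_sub_pow hid.aemeasurable_fst hQ0 hQ1 hint
  have hlimQR := tendsto_integral_sum_range_one_sub_pow (X := fun ω => Q ω * R ω)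
    (hid.aemeasurable_fst.mul hid.aemeasurable_snd) hQR0 hQR1
    (hindep.integrable_one_div_mul hid hint)
  rw [hindep.integral_one_div_mul hid hint] at hlimQR
  have hmain : α * (∫ ω, 1 / Q ω ∂P) ^ 2 ≤ 2 * ∫ ω, 1 / Q ω ∂P :=
    le_of_tendsto_of_tendsto (hlimQR.const_mul α) (hlimQ.const_mul 2)
      (eventually_atTop.mpr ⟨1, hineq⟩)
  have hpos : 0 < ∫ ω, 1 / Q ω ∂P := one_pos.trans_le (one_le_integral_one_div hQ0 hQ1 hint)
  refine ⟨hmain, (le_div_iff₀ hpos).mpr (le_of_mul_le_mul_right ?_ hpos)⟩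
  linear_combination hmain

/-- For `Q, R` i.i.d. with `0 < Q ≤ 1` a.s. and `1/Q` integrable, if
`2 E[s_k(Q)] ≥ α E[s_k(QR)]` for every `k ≥ 1`, then `2 E[1/Q] ≥ α (E[1/Q])²` and
`α ≤ 2 / E[1/Q]`. -/
theorem alpha_bound_integrable_case {Ω : Type*} [MeasurableSpace Ω]
    (P : Measure Ω) [IsProbabilityMeasure P]
    (Q R : Ω → ℝ) (hQ : Measurable Q) (hR : Measurable R)
    (hindep : IndepFun Q R P) (hid : IdentDistrib Q R P P)
    (hQ0 : ∀ᵐ ω ∂P, 0 < Q ω) (hQ1 : ∀ᵐ ω ∂P, Q ω ≤ 1)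
    (hint : Integrable (fun ω => 1 / Q ω) P)
    (α : ℝ)
    (hineq : ∀ k : ℕ, 1 ≤ k →
      2 * (∫ ω, (∑ j ∈ Finset.range k, (1 - Q ω) ^ j) ∂P) ≥
        α * (∫ ω, (∑ j ∈ Finset.range k, (1 - Q ω * R ω) ^ j) ∂P)) :
    2 * (∫ ω, 1 / Q ω ∂P) ≥ α * (∫ ω, 1 / Q ω ∂P) ^ 2 ∧
      α ≤ 2 / (∫ ω, 1 / Q ω ∂P) :=
  alpha_bound_integrable_case_general P Q R hindep hid hQ0 hQ1 hint α hineq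
end

section
/- Let (Ω, ℱ, P) be a probability space, let Q, R : Ω → ℝ be independent, identically distributed measurable functions with 0 ≤ Q ≤ 1 almost surely, and set q = P(Q = 0). Let α ∈ ℝ and assume that for every integer k ≥ 1, 2·E[s_k(Q)] ≥ α·E[s_k(Q·R)]. Then 2q ≥ α·(2q − q²); in particular, if q > 0 then α ≤ 2/(2 − q). -/
/-!
Since `s_k(x)/k → 1_{x = 0}` boundedly on `[0,1]` (for `x > 0` one has `s_k(x) ≤ 1/x`), dominated
convergence gives `E[s_k(X)]/k → P(X = 0)` for every `[0,1]`-valued `X`. Dividing the hypothesis by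
`k` and letting `k → ∞` yields `2 P(Q = 0) ≥ α P(QR = 0)`, and by independence and equal
distribution `P(QR = 0) = P(Q = 0 ∪ R = 0) = 2q - q²`.
-/

open MeasureTheory ProbabilityTheory Finset Filter Topology

section GeomSum

variable {x : ℝ}

lemma geom_sum_one_sub_nonneg (h1 : x ≤ 1) (k : ℕ) : 0 ≤ ∑ j ∈ range k, (1 - x) ^ j :=
  sum_nonneg fun j _ => pow_nonneg (by linarith) j

lemma geom_sum_one_sub_le_card (h0 : 0 ≤ x) (h1 : x ≤ 1) (k : ℕ) :
    ∑ j ∈ range k, (1 - x) ^ j ≤ k := by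
  simpa using sum_le_sum fun j (_ : j ∈ range k) => pow_le_one₀ (n := j) (by linarith : 0 ≤ 1 - x)
    (by linarith)

lemma geom_sum_one_sub_le_inv (h0 : 0 < x) (h1 : x ≤ 1) (k : ℕ) :
    ∑ j ∈ range k, (1 - x) ^ j ≤ x⁻¹ := by
  simpa [Nat.Ico_zero_eq_range] using
    geom_sum_Ico_le_of_lt_one (x := 1 - x) (m := 0) (n := k) (by linarith) (by linarith)

lemma tendsto_inv_mul_geom_sum_one_sub (h0 : 0 ≤ x) (h1 : x ≤ 1) :
    Tendsto (fun k : ℕ => (k : ℝ)⁻¹ * ∑ j ∈ range k, (1 - x) ^ j) atTop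
      (𝓝 (({0} : Set ℝ).indicator 1 x)) := by
  rcases h0.eq_or_lt with rfl | hx
  · refine tendsto_const_nhds.congr' ?_
    filter_upwards [eventually_ne_atTop 0] with k hk
    simp [hk]
  · rw [Set.indicator_of_notMem (show x ∉ ({0} : Set ℝ) from hx.ne')]
    have hlim : Tendsto (fun k : ℕ => (k : ℝ)⁻¹ * x⁻¹) atTop (𝓝 0) := by
      simpa using (tendsto_inv_atTop_nhds_zero_nat (𝕜 := ℝ)).mul_const x⁻¹
    exact squeeze_zero (fun k => mul_nonneg (by positivity) (geom_sum_one_sub_nonneg h1 k))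
      (fun k => mul_le_mul_of_nonneg_left (geom_sum_one_sub_le_inv hx h1 k) (by positivity)) hlim

end GeomSum

section Probability

variable {Ω : Type*} [MeasurableSpace Ω] {P : Measure Ω}

lemma tendsto_inv_mul_integral_geom_sum_one_sub [IsFiniteMeasure P] {X : Ω → ℝ}
    (hX : Measurable X) (h0 : ∀ᵐ ω ∂P, 0 ≤ X ω) (h1 : ∀ᵐ ω ∂P, X ω ≤ 1) :
    Tendsto (fun k : ℕ => (k : ℝ)⁻¹ * ∫ ω, ∑ j ∈ range k, (1 - X ω) ^ j ∂P) atTop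
      (𝓝 (P.real (X ⁻¹' {0}))) := by
  have hdom : Tendsto (fun k : ℕ => ∫ ω, (k : ℝ)⁻¹ * ∑ j ∈ range k, (1 - X ω) ^ j ∂P) atTop
      (𝓝 (∫ ω, ({0} : Set ℝ).indicator 1 (X ω) ∂P)) := by
    refine tendsto_integral_of_dominated_convergence (fun _ => 1) (fun k => ?_)
      (integrable_const 1) (fun k => ?_) ?_
    · exact (measurable_const.mul (Finset.measurable_sum _ fun j _ =>
        (measurable_const.sub hX).pow_const j)).aestronglyMeasurable
    · filter_upwards [h0, h1] with ω hω0 hω1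
      rw [Real.norm_of_nonneg (mul_nonneg (by positivity) (geom_sum_one_sub_nonneg hω1 k))]
      calc (k : ℝ)⁻¹ * ∑ j ∈ range k, (1 - X ω) ^ j ≤ (k : ℝ)⁻¹ * k :=
            mul_le_mul_of_nonneg_left (geom_sum_one_sub_le_card hω0 hω1 k) (by positivity)
        _ ≤ 1 := inv_mul_le_one_of_le₀ le_rfl (Nat.cast_nonneg k)
    · filter_upwards [h0, h1] with ω hω0 hω1
      exact tendsto_inv_mul_geom_sum_one_sub hω0 hω1
  have hlim : ∫ ω, ({0} : Set ℝ).indicator 1 (X ω) ∂P = P.real (X ⁻¹' {0}) :=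
    integral_indicator_one (hX (measurableSet_singleton 0))
  simpa only [integral_const_mul, hlim] using hdom

lemma measureReal_mul_preimage_zero [IsFiniteMeasure P] {Q R : Ω → ℝ} (hR : Measurable R)
    (hindep : IndepFun Q R P) (hid : IdentDistrib Q R P P) :
    P.real ((Q * R) ⁻¹' {0}) = 2 * P.real (Q ⁻¹' {0}) - P.real (Q ⁻¹' {0}) ^ 2 := by
  have hRQ : P.real (R ⁻¹' {0}) = P.real (Q ⁻¹' {0}) := by
    simp only [measureReal_def, hid.measure_mem_eq (measurableSet_singleton (0 : ℝ))]
  have hinter : P.real (Q ⁻¹' {0} ∩ R ⁻¹' {0}) = P.real (Q ⁻¹' {0}) ^ 2 := by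
    rw [measureReal_def, hindep.measure_inter_preimage_eq_mul _ _ (measurableSet_singleton 0)
      (measurableSet_singleton 0), ENNReal.toReal_mul, ← measureReal_def, ← measureReal_def, hRQ,
      sq]
  have hunion := measureReal_union_add_inter (μ := P) (s := Q ⁻¹' {0})
    (hR (measurableSet_singleton 0))
  have hset : (Q * R) ⁻¹' {0} = Q ⁻¹' {0} ∪ R ⁻¹' {0} := by
    ext ω; simp [mul_eq_zero]
  rw [hset]
  linarith

end Probability

/-- For `Q, R` i.i.d. with `0 ≤ Q ≤ 1` a.s. and `q = P(Q = 0)`, if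
`2 E[s_k(Q)] ≥ α E[s_k(QR)]` for every `k ≥ 1`, then `2q ≥ α(2q − q²)`; in particular if
`q > 0` then `α ≤ 2/(2 − q)`. -/
theorem alpha_bound_atom_case {Ω : Type*} [MeasurableSpace Ω]
    (P : Measure Ω) [IsProbabilityMeasure P]
    (Q R : Ω → ℝ) (hQ : Measurable Q) (hR : Measurable R)
    (hindep : IndepFun Q R P) (hid : IdentDistrib Q R P P)
    (hQ0 : ∀ᵐ ω ∂P, 0 ≤ Q ω) (hQ1 : ∀ᵐ ω ∂P, Q ω ≤ 1)
    (q : ℝ) (hq : q = (P {ω | Q ω = 0}).toReal)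
    (α : ℝ)
    (hineq : ∀ k : ℕ, 1 ≤ k →
      2 * (∫ ω, (∑ j ∈ Finset.range k, (1 - Q ω) ^ j) ∂P) ≥
        α * (∫ ω, (∑ j ∈ Finset.range k, (1 - Q ω * R ω) ^ j) ∂P)) :
    2 * q ≥ α * (2 * q - q ^ 2) ∧ (0 < q → α ≤ 2 / (2 - q)) := by
  have hq' : q = P.real (Q ⁻¹' {0}) := hq
  have hR01 : ∀ᵐ ω ∂P, R ω ∈ Set.Icc (0 : ℝ) 1 :=
    hid.ae_snd measurableSet_Icc (by filter_upwards [hQ0, hQ1] with ω h0 h1 using ⟨h0, h1⟩)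
  have hQR0 : ∀ᵐ ω ∂P, 0 ≤ (Q * R) ω := by
    filter_upwards [hQ0, hR01] with ω h0 hR using mul_nonneg h0 hR.1
  have hQR1 : ∀ᵐ ω ∂P, (Q * R) ω ≤ 1 := by
    filter_upwards [hQ1, hR01] with ω h1 hR using mul_le_one₀ h1 hR.1 hR.2
  have hlimQ := (tendsto_inv_mul_integral_geom_sum_one_sub hQ hQ0 hQ1).const_mul 2
  have hlimQR := (tendsto_inv_mul_integral_geom_sum_one_sub (hQ.mul hR) hQR0 hQR1).const_mul α
  rw [measureReal_mul_preimage_zero hR hindep hid, ← hq'] at hlimQR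
  rw [← hq'] at hlimQ
  have hmain : α * (2 * q - q ^ 2) ≤ 2 * q := by
    refine le_of_tendsto_of_tendsto hlimQR hlimQ ?_
    filter_upwards [eventually_ge_atTop 1] with k hk
    rw [mul_left_comm, mul_left_comm 2]
    exact mul_le_mul_of_nonneg_left (hineq k hk) (by positivity)
  refine ⟨hmain, fun hq0 => ?_⟩
  have hq1 : q ≤ 1 := hq' ▸ measureReal_le_one
  rw [le_div_iff₀ (by linarith)]
  nlinarith
end

section
/- Let (Ω, ℱ, P) be a probability space, let Q, R : Ω → ℝ be independent, identically distributed measurable functions with 0 < Q ≤ 1 almost surely, and suppose that the extended-real integral ∫ (1/Q) dP = +∞. Let α ∈ ℝ and assume that for every integer k ≥ 1, 2·E[s_k(Q)] ≥ α·E[s_k(Q·R)]. Then α ≤ 1. -/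
open MeasureTheory ProbabilityTheory Finset Filter Topology

/-!
For `q, r ∈ [0, 1]` and `c > 0`, `s_k(qr) ≥ s_k(q) + s_k(r) - 1/c - s_k(q) · 1{r < c}`, because
`s_k` is decreasing and `s_k(r) ≤ 1/r`. Taking expectations, independence and equality of laws give
`E[s_k(QR)] ≥ (2 - P(R < c)) E[s_k(Q)] - 1/c`. As `E[s_k(Q)] ↑ E[1/Q] = ∞`, the hypothesis forces
`α (2 - P(R < c)) ≤ 2` for every `c > 0`, and `P(R < c) → 0` as `c ↓ 0` since `R > 0` a.s.
-/

/-- The `s_k` of the paper: the `k`-th partial sum of `x⁻¹ = ∑ (1 - x) ^ j`. -/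
def invPartialSum (k : ℕ) (x : ℝ) : ℝ := ∑ j ∈ range k, (1 - x) ^ j

section invPartialSum

variable {k : ℕ} {x y : ℝ}

lemma invPartialSum_nonneg (hx : x ≤ 1) : 0 ≤ invPartialSum k x :=
  sum_nonneg fun j _ ↦ pow_nonneg (by linarith) j

lemma invPartialSum_le_natCast (hx0 : 0 ≤ x) (hx1 : x ≤ 1) : invPartialSum k x ≤ k := by
  simpa [invPartialSum] using sum_le_sum fun j (_ : j ∈ range k) ↦
    pow_le_one₀ (M₀ := ℝ) (by linarith : 0 ≤ 1 - x) (by linarith)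

lemma invPartialSum_le_inv (hx0 : 0 < x) (hx1 : x ≤ 1) : invPartialSum k x ≤ x⁻¹ := by
  rw [← one_div, le_div_iff₀ hx0]
  have h := geom_sum_mul (1 - x) k
  have := pow_nonneg (by linarith : (0 : ℝ) ≤ 1 - x) k
  unfold invPartialSum
  nlinarith

lemma invPartialSum_le_of_le (hxy : x ≤ y) (hy : y ≤ 1) :
    invPartialSum k y ≤ invPartialSum k x :=
  sum_le_sum fun j _ ↦ pow_le_pow_left₀ (by linarith) (by linarith) j

lemma invPartialSum_mono (hx : x ≤ 1) : Monotone fun k ↦ invPartialSum k x :=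
  fun _ _ hkl ↦ sum_le_sum_of_subset_of_nonneg (range_subset_range.2 hkl)
    fun j _ _ ↦ pow_nonneg (by linarith) j

lemma measurable_invPartialSum (k : ℕ) : Measurable (invPartialSum k) := by
  unfold invPartialSum; fun_prop

lemma tendsto_ofReal_invPartialSum (hx1 : x ≤ 1) :
    Tendsto (fun k ↦ ENNReal.ofReal (invPartialSum k x)) atTop (𝓝 (ENNReal.ofReal x)⁻¹) := by
  have h1x : ENNReal.ofReal x = 1 - ENNReal.ofReal (1 - x) := by
    rw [← ENNReal.ofReal_one, ← ENNReal.ofReal_sub _ (by linarith), sub_sub_cancel]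
  rw [h1x, ← ENNReal.tsum_geometric]
  convert ENNReal.summable.hasSum.tendsto_sum_nat using 2 with k
  rw [invPartialSum, ENNReal.ofReal_sum_of_nonneg fun j _ ↦ pow_nonneg (by linarith) j]
  exact sum_congr rfl fun j _ ↦ ENNReal.ofReal_pow (by linarith) j

lemma invPartialSum_add_sub_le_mul {q r c : ℝ} (hq0 : 0 ≤ q) (hq1 : q ≤ 1) (hr0 : 0 ≤ r)
    (hr1 : r ≤ 1) (hc : 0 < c) :
    invPartialSum k q + invPartialSum k r - c⁻¹ - invPartialSum k q * (Set.Iio c).indicator 1 r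
      ≤ invPartialSum k (q * r) := by
  by_cases hrc : r < c
  · have hsr : invPartialSum k r ≤ invPartialSum k (q * r) :=
      invPartialSum_le_of_le (mul_le_of_le_one_left hr0 hq1) hr1
    simp only [Set.indicator_of_mem (Set.mem_Iio.2 hrc), Pi.one_apply, mul_one]
    linarith [inv_pos.2 hc]
  · push Not at hrc
    have hsq : invPartialSum k q ≤ invPartialSum k (q * r) :=
      invPartialSum_le_of_le (mul_le_of_le_one_right hq0 hr1) hq1
    have hsr : invPartialSum k r ≤ c⁻¹ :=
      (invPartialSum_le_inv (hc.trans_le hrc) hr1).trans (inv_anti₀ hc hrc)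
    simp only [Set.indicator_of_notMem (Set.notMem_Iio.2 hrc), mul_zero]
    linarith

end invPartialSum

lemma le_of_tendsto_atTop_of_mul_le {ι : Type*} {l : Filter ι} [l.NeBot] {a : ι → ℝ}
    {x y C : ℝ} (ha : Tendsto a l atTop) (h : ∀ᶠ i in l, x * a i ≤ y * a i + C) : x ≤ y := by
  by_contra! hxy
  obtain ⟨i, hi, hi'⟩ :=
    (h.and ((ha.const_mul_atTop (sub_pos.2 hxy)).eventually_gt_atTop C)).exists
  linarith

section Probability

variable {Ω : Type*} [MeasurableSpace Ω] {P : Measure Ω}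

lemma tendsto_measureReal_lt_nhdsGT_zero [IsFiniteMeasure P] {R : Ω → ℝ} (hR : Measurable R)
    (hR0 : ∀ᵐ ω ∂P, 0 < R ω) :
    Tendsto (fun c ↦ P.real {ω | R ω < c}) (𝓝[>] 0) (𝓝 0) := by
  have hnull : P (⋂ c > 0, {ω | R ω < c}) = 0 := by
    refine measure_mono_null (fun ω hω ↦ ?_) (ae_iff.1 hR0)
    simp only [Set.mem_iInter] at hω
    exact fun hpos ↦ lt_irrefl (R ω) (hω (R ω) hpos)
  have h := tendsto_measure_biInter_gt (μ := P) (s := fun c ↦ {ω | R ω < c})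
    (fun _ _ ↦ (hR measurableSet_Iio).nullMeasurableSet)
    (fun _ _ _ hij _ hω ↦ lt_of_lt_of_le hω hij) ⟨1, one_pos, measure_ne_top P _⟩
  rw [hnull] at h
  exact (ENNReal.tendsto_toReal ENNReal.zero_ne_top).comp h

lemma integrable_invPartialSum_comp [IsFiniteMeasure P] {X : Ω → ℝ} (hX : AEMeasurable X P)
    (hX0 : ∀ᵐ ω ∂P, 0 ≤ X ω) (hX1 : ∀ᵐ ω ∂P, X ω ≤ 1) (k : ℕ) :
    Integrable (fun ω ↦ invPartialSum k (X ω)) P := by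
  refine .of_bound ((measurable_invPartialSum k).comp_aemeasurable hX).aestronglyMeasurable k ?_
  filter_upwards [hX0, hX1] with ω h0 h1
  rw [Real.norm_of_nonneg (invPartialSum_nonneg h1)]
  exact invPartialSum_le_natCast h0 h1

lemma tendsto_integral_invPartialSum_atTop [IsFiniteMeasure P] {X : Ω → ℝ}
    (hX : AEMeasurable X P) (hX0 : ∀ᵐ ω ∂P, 0 ≤ X ω) (hX1 : ∀ᵐ ω ∂P, X ω ≤ 1)
    (hinf : ∫⁻ ω, (ENNReal.ofReal (X ω))⁻¹ ∂P = ⊤) :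
    Tendsto (fun k ↦ ∫ ω, invPartialSum k (X ω) ∂P) atTop atTop := by
  rw [← ENNReal.tendsto_ofReal_nhds_top, ← hinf]
  have hlin (k : ℕ) : ENNReal.ofReal (∫ ω, invPartialSum k (X ω) ∂P) =
      ∫⁻ ω, ENNReal.ofReal (invPartialSum k (X ω)) ∂P :=
    ofReal_integral_eq_lintegral_ofReal (integrable_invPartialSum_comp hX hX0 hX1 k)
      (hX1.mono fun _ h ↦ invPartialSum_nonneg h)
  simp_rw [hlin]
  refine lintegral_tendsto_of_tendsto_of_monotone
    (fun k ↦ (ENNReal.measurable_ofReal.comp (measurable_invPartialSum k)).comp_aemeasurable hX)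
    ?_ ?_
  · filter_upwards [hX1] with ω h
    exact ENNReal.ofReal_mono.comp (invPartialSum_mono h)
  · filter_upwards [hX1] with ω h
    exact tendsto_ofReal_invPartialSum h

lemma ProbabilityTheory.IndepFun.le_integral_invPartialSum_mul [IsProbabilityMeasure P]
    {Q R : Ω → ℝ} (hindep : IndepFun Q R P) (hQ : AEMeasurable Q P) (hR : Measurable R)
    (hQ0 : ∀ᵐ ω ∂P, 0 ≤ Q ω) (hQ1 : ∀ᵐ ω ∂P, Q ω ≤ 1)
    (hR0 : ∀ᵐ ω ∂P, 0 ≤ R ω) (hR1 : ∀ᵐ ω ∂P, R ω ≤ 1) {c : ℝ} (hc : 0 < c) (k : ℕ) :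
    ∫ ω, invPartialSum k (Q ω) ∂P + ∫ ω, invPartialSum k (R ω) ∂P - c⁻¹
        - (∫ ω, invPartialSum k (Q ω) ∂P) * P.real {ω | R ω < c}
      ≤ ∫ ω, invPartialSum k (Q ω * R ω) ∂P := by
  have hsQ := integrable_invPartialSum_comp hQ hQ0 hQ1 k
  have hsR := integrable_invPartialSum_comp hR.aemeasurable hR0 hR1 k
  have hind : Measurable ((Set.Iio c).indicator (1 : ℝ → ℝ)) :=
    measurable_one.indicator measurableSet_Iio
  have hprod : ∫ ω, invPartialSum k (Q ω) * (Set.Iio c).indicator 1 (R ω) ∂P =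
      (∫ ω, invPartialSum k (Q ω) ∂P) * P.real {ω | R ω < c} := by
    refine ((hindep.comp (measurable_invPartialSum k) hind).integral_fun_mul_eq_mul_integral
      hsQ.aestronglyMeasurable (hind.comp hR).aestronglyMeasurable).trans ?_
    congr 1
    exact integral_indicator_one (hR measurableSet_Iio)
  have hsQind : Integrable (fun ω ↦ invPartialSum k (Q ω) * (Set.Iio c).indicator 1 (R ω)) P :=
    hsQ.mul_bdd (c := 1) (hind.comp hR).aestronglyMeasurable
      (.of_forall fun _ ↦ (norm_indicator_le_norm_self _ _).trans (by simp))
  have hsum : Integrable (fun ω ↦ invPartialSum k (Q ω) + invPartialSum k (R ω)) P :=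
    hsQ.add hsR
  have hsumc : Integrable (fun ω ↦ invPartialSum k (Q ω) + invPartialSum k (R ω) - c⁻¹) P :=
    hsum.sub (integrable_const _)
  calc _ = ∫ ω, (invPartialSum k (Q ω) + invPartialSum k (R ω) - c⁻¹
          - invPartialSum k (Q ω) * (Set.Iio c).indicator 1 (R ω)) ∂P := by
        rw [integral_sub hsumc hsQind, integral_sub hsum (integrable_const _),
          integral_add hsQ hsR, hprod, integral_const, probReal_univ, one_smul]
    _ ≤ ∫ ω, invPartialSum k (Q ω * R ω) ∂P := by
      refine integral_mono_ae (hsumc.sub hsQind)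
        (integrable_invPartialSum_comp (hQ.mul hR.aemeasurable) ?_ ?_ k) ?_
      · filter_upwards [hQ0, hR0] with ω hq hr using mul_nonneg hq hr
      · filter_upwards [hQ0, hQ1, hR0, hR1] with ω hq0 hq1 hr0 hr1 using mul_le_one₀ hq1 hr0 hr1
      · filter_upwards [hQ0, hQ1, hR0, hR1] with ω hq0 hq1 hr0 hr1
        exact invPartialSum_add_sub_le_mul hq0 hq1 hr0 hr1 hc

end Probability

/-- For `Q, R` i.i.d. with `0 < Q ≤ 1` a.s. and `∫⁻ 1/Q dP = ∞`, if
`2 E[s_k(Q)] ≥ α E[s_k(QR)]` for every `k ≥ 1`, then `α ≤ 1`. -/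
theorem alpha_bound_infinite_expectation_case {Ω : Type*} [MeasurableSpace Ω]
    (P : Measure Ω) [IsProbabilityMeasure P]
    (Q R : Ω → ℝ) (hQ : Measurable Q) (hR : Measurable R)
    (hindep : IndepFun Q R P) (hid : IdentDistrib Q R P P)
    (hQ0 : ∀ᵐ ω ∂P, 0 < Q ω) (hQ1 : ∀ᵐ ω ∂P, Q ω ≤ 1)
    (hinf : ∫⁻ ω, (ENNReal.ofReal (Q ω))⁻¹ ∂P = ⊤)
    (α : ℝ)
    (hineq : ∀ k : ℕ, 1 ≤ k →
      2 * (∫ ω, (∑ j ∈ Finset.range k, (1 - Q ω) ^ j) ∂P) ≥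
        α * (∫ ω, (∑ j ∈ Finset.range k, (1 - Q ω * R ω) ^ j) ∂P)) :
    α ≤ 1 := by
  rcases le_or_gt α 0 with hα | hα
  · linarith
  have hR0 : ∀ᵐ ω ∂P, 0 < R ω := hid.ae_snd measurableSet_Ioi hQ0
  have hR1 : ∀ᵐ ω ∂P, R ω ≤ 1 := hid.ae_snd measurableSet_Iic hQ1
  have hQ0' : ∀ᵐ ω ∂P, 0 ≤ Q ω := hQ0.mono fun _ h ↦ h.le
  have hdiv := tendsto_integral_invPartialSum_atTop hQ.aemeasurable hQ0' hQ1 hinf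
  have hbound (c : ℝ) (hc : 0 < c) : α * (2 - P.real {ω | R ω < c}) ≤ 2 := by
    refine le_of_tendsto_atTop_of_mul_le hdiv (C := α * c⁻¹) ?_
    filter_upwards [eventually_ge_atTop 1] with k hk
    have hsym : ∫ ω, invPartialSum k (R ω) ∂P = ∫ ω, invPartialSum k (Q ω) ∂P :=
      (hid.comp (measurable_invPartialSum k)).integral_eq.symm
    have hlow := hindep.le_integral_invPartialSum_mul hQ.aemeasurable hR hQ0' hQ1
      (hR0.mono fun _ h ↦ h.le) hR1 hc k
    rw [hsym] at hlow
    have hk' : α * ∫ ω, invPartialSum k (Q ω * R ω) ∂P ≤ 2 * ∫ ω, invPartialSum k (Q ω) ∂P :=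
      hineq k hk
    linarith [mul_le_mul_of_nonneg_left hlow hα.le]
  have hlim : Tendsto (fun c ↦ α * (2 - P.real {ω | R ω < c})) (𝓝[>] 0) (𝓝 (α * (2 - 0))) :=
    ((tendsto_measureReal_lt_nhdsGT_zero hR hR0).const_sub 2).const_mul α
  linarith [le_of_tendsto hlim (eventually_nhdsWithin_of_forall hbound)]
end

section
/- Let λ be a real number and d a positive integer with 0 < λ < d. Then the Poisson tail probability satisfies ∑_{j=d+1}^{∞} e^{−λ} λ^j / j! ≤ e^{d−λ} · (λ/d)^d. -/
/-!
Since `λ ≤ d`, each term `λ ^ n` with `n ≥ d` is at most `(λ / d) ^ d * d ^ n`, so the tail of the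
series of `e ^ λ` beyond `d` is at most `(λ / d) ^ d` times the tail of the series of `e ^ d`,
which is at most `e ^ d`.
-/

open Finset Nat Real

lemma sum_range_pow_add_div_factorial_le_exp {y : ℝ} (hy : 0 ≤ y) (m n : ℕ) :
    ∑ i ∈ range n, y ^ (i + m) / (i + m)! ≤ exp y :=
  calc ∑ i ∈ range n, y ^ (i + m) / (i + m)!
      ≤ ∑ i ∈ range m, y ^ i / i ! + ∑ i ∈ range n, y ^ (m + i) / (m + i)! := by
        simp_rw [add_comm _ m]
        exact le_add_of_nonneg_left (sum_nonneg fun i _ ↦ by positivity)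
    _ = ∑ i ∈ range (m + n), y ^ i / i ! := (sum_range_add _ m n).symm
    _ ≤ exp y := sum_le_exp_of_nonneg hy _

lemma pow_add_le_div_pow_mul_pow {x y : ℝ} (hx : 0 ≤ x) (hxy : x ≤ y) (hy : 0 < y) (i m : ℕ) :
    x ^ (i + m) ≤ (x / y) ^ m * y ^ (i + m) :=
  calc x ^ (i + m) = x ^ i * x ^ m := pow_add x i m
    _ ≤ y ^ i * x ^ m := by gcongr
    _ = (x / y) ^ m * y ^ (i + m) := by
        rw [div_pow, pow_add y, div_mul_eq_mul_div, eq_div_iff (by positivity)]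
        ring

lemma tsum_pow_add_div_factorial_le {x y : ℝ} (hx : 0 ≤ x) (hxy : x ≤ y) (hy : 0 < y) (m : ℕ) :
    ∑' i, x ^ (i + m) / (i + m)! ≤ (x / y) ^ m * exp y := by
  refine Real.tsum_le_of_sum_range_le (fun i ↦ by positivity) fun n ↦ ?_
  calc ∑ i ∈ range n, x ^ (i + m) / (i + m)!
      ≤ ∑ i ∈ range n, (x / y) ^ m * (y ^ (i + m) / (i + m)!) := by
        gcongr with i
        rw [← mul_div_assoc]
        gcongr
        exact pow_add_le_div_pow_mul_pow hx hxy hy i m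
    _ = (x / y) ^ m * ∑ i ∈ range n, y ^ (i + m) / (i + m)! := (mul_sum _ _ _).symm
    _ ≤ (x / y) ^ m * exp y := by
        gcongr
        exact sum_range_pow_add_div_factorial_le_exp hy.le m n

theorem poisson_tail_bound_general (lam : ℝ) (d : ℕ) (hlam : 0 < lam) (hlt : lam < d) :
    (∑' j : ℕ, Real.exp (-lam) * lam ^ (j + d + 1) / (Nat.factorial (j + d + 1))) ≤
      Real.exp ((d : ℝ) - lam) * (lam / d) ^ d := by
  have hd : (0 : ℝ) < d := hlam.trans hlt
  calc ∑' j : ℕ, exp (-lam) * lam ^ (j + d + 1) / (j + d + 1)!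
      = exp (-lam) * ∑' j : ℕ, lam ^ (j + (d + 1)) / (j + (d + 1))! := by
        rw [← tsum_mul_left]
        simp_rw [mul_div_assoc, add_assoc]
    _ ≤ exp (-lam) * ((lam / d) ^ (d + 1) * exp d) := by
        gcongr
        exact tsum_pow_add_div_factorial_le hlam.le hlt.le hd (d + 1)
    _ ≤ exp (-lam) * ((lam / d) ^ d * exp d) := by
        gcongr _ * (?_ * _)
        exact pow_le_pow_of_le_one (by positivity) ((div_le_one hd).mpr hlt.le) d.le_succ
    _ = exp (d - lam) * (lam / d) ^ d := by
        rw [exp_sub, exp_neg]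
        ring

/-- For `0 < λ < d`, the Poisson tail satisfies
`∑_{j > d} e^{−λ} λ^j / j! ≤ e^{d−λ} (λ/d)^d`. -/
theorem poisson_tail_bound (lam : ℝ) (d : ℕ) (hd : 0 < d) (hlam : 0 < lam) (hlt : lam < d) :
    (∑' j : ℕ, Real.exp (-lam) * lam ^ (j + d + 1) / (Nat.factorial (j + d + 1))) ≤
      Real.exp ((d : ℝ) - lam) * (lam / d) ^ d :=
  poisson_tail_bound_general lam d hlam hlt
end

section
/- For every real u ∈ (0,1) and every real d > 1, e^{d^u} · (1 − d^{u−1})^d ≤ e^{−d^{2u−1}/2}. (Note that d > 1 and u < 1 imply 0 < d^{u−1} < 1, so the left-hand side is well defined and positive.) -/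
private lemma key_aux : ∀ x : ℝ, 0 ≤ x → x < 1 →
    (1 - x) * Real.exp (x + x ^ 2 / 2) ≤ 1 := by
  intro x hx0 hx1
  set f : ℝ → ℝ := fun y => (1 - y) * Real.exp (y + y ^ 2 / 2) with hf
  have hderiv : ∀ y : ℝ, HasDerivAt f
      ((-1) * Real.exp (y + y ^ 2 / 2) +
        (1 - y) * (Real.exp (y + y ^ 2 / 2) * (1 + (2 * y ^ 1) / 2))) y := by
    intro y
    have h1 : HasDerivAt (fun z : ℝ => 1 - z) (-1) y := (hasDerivAt_id y).const_sub 1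
    have h2 : HasDerivAt (fun z : ℝ => z + z ^ 2 / 2) (1 + (2 * y ^ 1) / 2) y :=
      (hasDerivAt_id y).add ((hasDerivAt_pow 2 y).div_const 2)
    exact h1.mul h2.exp
  have hanti : AntitoneOn f (Set.Icc (0 : ℝ) 1) := by
    apply antitoneOn_of_deriv_nonpos (convex_Icc 0 1)
    · exact Continuous.continuousOn (by fun_prop)
    · intro y hy
      exact ((hderiv y).differentiableAt).differentiableWithinAt
    · intro y hy
      rw [interior_Icc] at hy
      rw [(hderiv y).deriv]
      nlinarith [hy.1, hy.2, Real.exp_pos (y + y ^ 2 / 2)]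
  have h0 : f 0 = 1 := by simp [hf]
  have h := hanti (Set.mem_Icc.mpr ⟨le_refl 0, zero_le_one⟩)
    (Set.mem_Icc.mpr ⟨hx0, hx1.le⟩) hx0
  rwa [h0] at h

/-- For `u ∈ (0,1)` and `d > 1`,
`e^{d^u} (1 − d^{u−1})^d ≤ e^{−d^{2u−1}/2}` (real powers). -/
theorem exp_rpow_bound (u d : ℝ) (hu0 : 0 < u) (hu1 : u < 1) (hd : 1 < d) :
    Real.exp (d ^ u) * (1 - d ^ (u - 1)) ^ d ≤ Real.exp (-(d ^ (2 * u - 1)) / 2) := by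
  have hd0 : (0 : ℝ) < d := lt_trans one_pos hd
  set x : ℝ := d ^ (u - 1) with hxdef
  have hx0 : 0 < x := Real.rpow_pos_of_pos hd0 _
  have hx1 : x < 1 := Real.rpow_lt_one_of_one_lt_of_neg hd (by linarith)
  have hdu : d ^ u = x * d := by
    rw [hxdef, show u = (u - 1) + 1 by ring, Real.rpow_add hd0, Real.rpow_one]
    ring_nf
  have hdu2 : d ^ (2 * u - 1) = x ^ 2 * d := by
    rw [hxdef, sq, show 2 * u - 1 = (u - 1) + ((u - 1) + 1) by ring,
      Real.rpow_add hd0, Real.rpow_add hd0, Real.rpow_one]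
    ring
  have hbase : Real.exp x * (1 - x) ≤ Real.exp (-(x ^ 2) / 2) := by
    have hk := key_aux x hx0.le hx1
    rw [Real.exp_add] at hk
    have he : (0 : ℝ) < Real.exp (x ^ 2 / 2) := Real.exp_pos _
    have h : Real.exp x * (1 - x) ≤ 1 / Real.exp (x ^ 2 / 2) := by
      rw [le_div_iff₀ he]; nlinarith
    calc Real.exp x * (1 - x) ≤ 1 / Real.exp (x ^ 2 / 2) := h
      _ = Real.exp (-(x ^ 2) / 2) := by
          rw [one_div, ← Real.exp_neg]
          congr 1; ring
  have h1x : (0 : ℝ) ≤ 1 - x := by linarith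
  have hLHS : Real.exp (d ^ u) * (1 - x) ^ d = (Real.exp x * (1 - x)) ^ d := by
    rw [Real.mul_rpow (Real.exp_pos x).le h1x, hdu, Real.exp_mul]
  have hRHS : Real.exp (-(d ^ (2 * u - 1)) / 2) = (Real.exp (-(x ^ 2) / 2)) ^ d := by
    rw [hdu2, ← Real.exp_mul]
    congr 1; ring
  rw [hLHS, hRHS]
  exact Real.rpow_le_rpow (by positivity) hbase hd0.le
end

section
/- Let k ≥ 1 be an integer, let ε ∈ (0,1) be real, and let β be a nonnegative real-valued function on the nonempty subsets of {1,…,k} with ε·∑_{T ≠ ∅} β(T) ≤ 1. Define π on subsets of {1,…,k} by π(T) = ε·β(T) for T ≠ ∅ and π(∅) = 1 − ε·∑_{T ≠ ∅} β(T). Then the entropy satisfies H(π) = ∑_T −π(T)·log π(T) ≤ ε·log(1/ε)·∑_{T ≠ ∅} β(T) + ε·∑_{T ≠ ∅} β(T) + (2^k − 1)·ε/e. -/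
/-!
Split off the atom `∅` of mass `1 - εS`. Its entropy term is at most `εS`, since `-y log y ≤ 1 - y`.
Every other atom has mass `ε β(T)`, and `h(εb) = b h(ε) + ε h(b) ≤ ε log(1/ε) b + ε/e` because
`h ≤ 1/e`; there are `2^k - 1` of them.
-/

open Finset Real

lemma Real.negMulLog_le_inv_exp_one {x : ℝ} (hx : 0 ≤ x) : negMulLog x ≤ (exp 1)⁻¹ := by
  -- `-y log y ≤ 1 - y` at `y = e x`, expanded by the product rule for `negMulLog`
  have key := negMulLog_le_one_sub_self (mul_nonneg (exp_pos 1).le hx)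
  rw [negMulLog_mul, negMulLog, log_exp] at key
  rw [← one_div, le_div_iff₀ (exp_pos 1)]
  linarith

lemma Real.negMulLog_mul_le {ε b : ℝ} (hε : 0 ≤ ε) (hb : 0 ≤ b) :
    negMulLog (ε * b) ≤ ε * log (1 / ε) * b + ε / exp 1 := by
  have hε_term : b * negMulLog ε = ε * log (1 / ε) * b := by
    rw [negMulLog, one_div, log_inv]; ring
  have hb_term : ε * negMulLog b ≤ ε / exp 1 := by
    rw [div_eq_mul_inv]; exact mul_le_mul_of_nonneg_left (negMulLog_le_inv_exp_one hb) hε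
  rw [negMulLog_mul]
  linarith

lemma Real.sum_negMulLog_mul_le {ι : Type*} (s : Finset ι) {ε : ℝ} (hε : 0 ≤ ε) {b : ι → ℝ}
    (hb : ∀ i ∈ s, 0 ≤ b i) :
    ∑ i ∈ s, negMulLog (ε * b i) ≤ ε * log (1 / ε) * ∑ i ∈ s, b i + #s * ε / exp 1 := by
  calc ∑ i ∈ s, negMulLog (ε * b i)
      ≤ ∑ i ∈ s, (ε * log (1 / ε) * b i + ε / exp 1) :=
        sum_le_sum fun i hi ↦ negMulLog_mul_le hε (hb i hi)
    _ = ε * log (1 / ε) * ∑ i ∈ s, b i + #s * ε / exp 1 := by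
        rw [sum_add_distrib, ← mul_sum, sum_const, nsmul_eq_mul, mul_div_assoc]

theorem Real.sum_negMulLog_le_of_small_off_point {α : Type*} [Fintype α] [DecidableEq α]
    (a₀ : α) {ε : ℝ} (hε : 0 ≤ ε) {β p : α → ℝ} (hβ : ∀ a ≠ a₀, 0 ≤ β a)
    (hsum : ε * ∑ a ∈ univ.erase a₀, β a ≤ 1)
    (hp₀ : p a₀ = 1 - ε * ∑ a ∈ univ.erase a₀, β a) (hp : ∀ a ≠ a₀, p a = ε * β a) :
    ∑ a, negMulLog (p a) ≤
      ε * log (1 / ε) * ∑ a ∈ univ.erase a₀, β a + ε * ∑ a ∈ univ.erase a₀, β a +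
        (Fintype.card α - 1) * ε / exp 1 := by
  set S := ∑ a ∈ univ.erase a₀, β a
  have hS : 0 ≤ ε * S := mul_nonneg hε (sum_nonneg fun a ha ↦ hβ a (ne_of_mem_erase ha))
  have h_point : negMulLog (p a₀) ≤ ε * S := by
    rw [hp₀]; linarith [negMulLog_le_one_sub_self (x := 1 - ε * S) (by linarith)]
  have h_rest : ∑ a ∈ univ.erase a₀, negMulLog (p a) ≤
      ε * log (1 / ε) * S + (Fintype.card α - 1) * ε / exp 1 := by
    rw [sum_congr rfl fun a ha ↦ by rw [hp a (ne_of_mem_erase ha)]]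
    have := sum_negMulLog_mul_le (univ.erase a₀) hε fun a ha ↦ hβ a (ne_of_mem_erase ha)
    rwa [card_erase_of_mem (mem_univ a₀), card_univ,
      Nat.cast_sub (Fintype.card_pos_iff.2 ⟨a₀⟩), Nat.cast_one] at this
  rw [← add_sum_erase univ _ (mem_univ a₀)]
  linarith

theorem entropy_upper_bound_small_density_general (k : ℕ)
    (ε : ℝ) (hε0 : 0 < ε)
    (β : Finset (Fin k) → ℝ)
    (hβ_nonneg : ∀ T : Finset (Fin k), T ≠ ∅ → 0 ≤ β T)
    (hsum : ε * (∑ T ∈ univ.filter (fun T : Finset (Fin k) => T ≠ ∅), β T) ≤ 1)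
    (p : Finset (Fin k) → ℝ)
    (hp : ∀ T : Finset (Fin k),
      p T = if T = ∅ then
          1 - ε * (∑ T' ∈ univ.filter (fun T' : Finset (Fin k) => T' ≠ ∅), β T')
        else ε * β T) :
    ∑ T : Finset (Fin k), Real.negMulLog (p T) ≤
      ε * Real.log (1 / ε) * (∑ T ∈ univ.filter (fun T : Finset (Fin k) => T ≠ ∅), β T) +
        ε * (∑ T ∈ univ.filter (fun T : Finset (Fin k) => T ≠ ∅), β T) +
        ((2 : ℝ) ^ k - 1) * ε / Real.exp 1 := by
  have h_card : (Fintype.card (Finset (Fin k)) : ℝ) = 2 ^ k := by simp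
  rw [filter_ne', ← h_card] at *
  exact sum_negMulLog_le_of_small_off_point ∅ hε0.le hβ_nonneg hsum (by simp [hp])
    fun T hT ↦ by simp [hp, hT]

/-- For `ε ∈ (0,1)` and nonnegative `β` on nonempty subsets of `{1,…,k}`
with `ε ∑_{T≠∅} β(T) ≤ 1`, the probability vector `π` with `π(T) = ε β(T)` for `T ≠ ∅` and
`π(∅) = 1 − ε ∑_{T≠∅} β(T)` satisfies
`H(π) ≤ ε log(1/ε) ∑_{T≠∅} β(T) + ε ∑_{T≠∅} β(T) + (2^k − 1) ε / e`. -/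
theorem entropy_upper_bound_small_density (k : ℕ) (hk : 1 ≤ k)
    (ε : ℝ) (hε0 : 0 < ε) (hε1 : ε < 1)
    (β : Finset (Fin k) → ℝ)
    (hβ_nonneg : ∀ T : Finset (Fin k), T ≠ ∅ → 0 ≤ β T)
    (hsum : ε * (∑ T ∈ univ.filter (fun T : Finset (Fin k) => T ≠ ∅), β T) ≤ 1)
    (p : Finset (Fin k) → ℝ)
    (hp : ∀ T : Finset (Fin k),
      p T = if T = ∅ then
          1 - ε * (∑ T' ∈ univ.filter (fun T' : Finset (Fin k) => T' ≠ ∅), β T')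
        else ε * β T) :
    ∑ T : Finset (Fin k), Real.negMulLog (p T) ≤
      ε * Real.log (1 / ε) * (∑ T ∈ univ.filter (fun T : Finset (Fin k) => T ≠ ∅), β T) +
        ε * (∑ T ∈ univ.filter (fun T : Finset (Fin k) => T ≠ ∅), β T) +
        ((2 : ℝ) ^ k - 1) * ε / Real.exp 1 :=
  entropy_upper_bound_small_density_general k ε hε0 β hβ_nonneg hsum p hp
end
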